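/- arXiv:1311.6876 — 2 statements merged into one kernel-verified Lean document; each statement's English description precedes it below -/
import Mathlib

section
/- Let X_q, X_a, M̃, y_q, y_a, η ≥ 0, λ > 0 be as above, let L be the joint square-loss objective, and let B be the block matrix with blocks B₁₁ = (η+1)X_qᵀX_q + λI, B₁₂ = −η X_qᵀ M̃ X_a, B₂₁ = −η X_aᵀ M̃ᵀ X_q, B₂₂ = X_aᵀX_a + η X_aᵀ M̃ᵀ M̃ X_a + λI. Then a pair (β_q, β_a) is a critical point of L (both partial gradients vanish) if and only if B·(β_q; β_a) = (X_qᵀ y_q; X_aᵀ y_a), where (u; v) denotes the stacked column vector. -/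
/-!
Since `‖T y - c‖²` has gradient `2 T⋆(T y - c)`, each of the two partial maps of `L` is a sum of
such squared residuals, and collecting terms shows that its gradient is exactly twice the
corresponding block row of `B (βq; βa) - (Xqᵀ yq; Xaᵀ ya)`.
-/

open Matrix

namespace HasGradientAt

variable {F : Type*} [NormedAddCommGroup F] [InnerProductSpace ℝ F] [CompleteSpace F]
  {f g : F → ℝ} {f' g' x : F}

theorem add (hf : HasGradientAt f f' x) (hg : HasGradientAt g g' x) :
    HasGradientAt (fun y => f y + g y) (f' + g') x := by
  rw [hasGradientAt_iff_hasFDerivAt, map_add]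
  exact (hasGradientAt_iff_hasFDerivAt.mp hf).add (hasGradientAt_iff_hasFDerivAt.mp hg)

theorem const_mul (c : ℝ) (hf : HasGradientAt f f' x) :
    HasGradientAt (fun y => c * f y) (c • f') x := by
  rw [hasGradientAt_iff_hasFDerivAt, map_smul]
  exact (hasGradientAt_iff_hasFDerivAt.mp hf).const_mul c

theorem hasGradientAt_zero_iff (hf : HasGradientAt f f' x) : HasGradientAt f 0 x ↔ f' = 0 :=
  ⟨hf.unique, fun h => h ▸ hf⟩

end HasGradientAt

theorem hasGradientAt_norm_sub_sq {E F : Type*} [NormedAddCommGroup E] [InnerProductSpace ℝ E]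
    [CompleteSpace E] [NormedAddCommGroup F] [InnerProductSpace ℝ F] [CompleteSpace F]
    (T : E →L[ℝ] F) (c : F) (x : E) :
    HasGradientAt (fun y => ‖T y - c‖ ^ 2) ((2 : ℝ) • T.adjoint (T x - c)) x := by
  rw [hasGradientAt_iff_hasFDerivAt]
  refine (T.hasFDerivAt.sub_const c).norm_sq.congr_fderiv ?_
  ext h
  simp [ContinuousLinearMap.adjoint_inner_left]

namespace Matrix

variable {m n : Type*} [Fintype m] [Fintype n]

theorem hasGradientAt_sum_sq_mulVec_sub (A : Matrix m n ℝ) (c : m → ℝ)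
    (x : EuclideanSpace ℝ n) :
    HasGradientAt (fun y : EuclideanSpace ℝ n => ∑ i, ((A *ᵥ y) i - c i) ^ 2)
      (WithLp.toLp 2 ((2 : ℝ) • (Aᵀ *ᵥ (A *ᵥ x - c)))) x := by
  classical
  set T := LinearMap.toContinuousLinearMap (toEuclideanLin A)
  have hT : T.adjoint = LinearMap.toContinuousLinearMap (toEuclideanLin Aᵀ) := by
    rw [← LinearMap.adjoint_toContinuousLinearMap, ← toEuclideanLin_conjTranspose_eq_adjoint,
      conjTranspose_eq_transpose_of_trivial]
  have hnorm : ∀ y : EuclideanSpace ℝ n,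
      ∑ i, ((A *ᵥ y) i - c i) ^ 2 = ‖T y - WithLp.toLp 2 c‖ ^ 2 := fun y => by
    simp [T, EuclideanSpace.norm_sq_eq]
  simp_rw [hnorm]
  convert hasGradientAt_norm_sub_sq T (WithLp.toLp 2 c) x using 1
  rw [hT]
  ext i
  simp [T, mulVec_sub]

end Matrix

theorem EuclideanSpace.hasGradientAt_sum_sq {n : Type*} [Fintype n] (x : EuclideanSpace ℝ n) :
    HasGradientAt (fun y : EuclideanSpace ℝ n => ∑ i, y i ^ 2) ((2 : ℝ) • x) x := by
  classical
  simpa using hasGradientAt_sum_sq_mulVec_sub (1 : Matrix n n ℝ) 0 x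

theorem cops_critical_point_iff_linear_system_general (nq na p r : ℕ)
    (Xq : Matrix (Fin nq) (Fin p) ℝ) (Xa : Matrix (Fin na) (Fin r) ℝ)
    (M : Matrix (Fin nq) (Fin na) ℝ) (yq : Fin nq → ℝ) (ya : Fin na → ℝ)
    (η lam : ℝ) :
    let L : EuclideanSpace ℝ (Fin p) → EuclideanSpace ℝ (Fin r) → ℝ := fun βq βa =>
      ∑ i, (Xq.mulVec βq i - yq i) ^ 2 + ∑ j, (Xa.mulVec βa j - ya j) ^ 2 +
        η * ∑ i, (Xq.mulVec βq i - M.mulVec (Xa.mulVec βa) i) ^ 2 +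
        lam * (∑ i, (βq i) ^ 2 + ∑ j, (βa j) ^ 2)
    let B : Matrix (Fin p ⊕ Fin r) (Fin p ⊕ Fin r) ℝ := Matrix.fromBlocks
      ((η + 1) • (Xqᵀ * Xq) + lam • (1 : Matrix (Fin p) (Fin p) ℝ))
      ((-η) • (Xqᵀ * M * Xa))
      ((-η) • (Xaᵀ * Mᵀ * Xq))
      (Xaᵀ * Xa + η • (Xaᵀ * Mᵀ * M * Xa) + lam • (1 : Matrix (Fin r) (Fin r) ℝ))
    ∀ (βq : EuclideanSpace ℝ (Fin p)) (βa : EuclideanSpace ℝ (Fin r)),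
      (HasGradientAt (fun b => L b βa) (0 : EuclideanSpace ℝ (Fin p)) βq ∧
        HasGradientAt (fun b => L βq b) (0 : EuclideanSpace ℝ (Fin r)) βa) ↔
      B.mulVec (Sum.elim βq βa) = Sum.elim (Xqᵀ.mulVec yq) (Xaᵀ.mulVec ya) := by
  intro L B βq βa
  have hq : HasGradientAt (fun b => L b βa)
      (WithLp.toLp 2 ((2 : ℝ) • ((B *ᵥ Sum.elim βq βa) ∘ Sum.inl - Xqᵀ *ᵥ yq))) βq := by
    convert (((hasGradientAt_sum_sq_mulVec_sub Xq yq βq).add (hasGradientAt_const βq _)).add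
      ((hasGradientAt_sum_sq_mulVec_sub Xq (M *ᵥ (Xa *ᵥ βa)) βq).const_mul η)).add
      (((EuclideanSpace.hasGradientAt_sum_sq βq).add (hasGradientAt_const βq _)).const_mul lam)
      using 1
    ext i
    simp only [B, neg_smul, fromBlocks_mulVec, Sum.elim_comp_inl, Sum.elim_comp_inr,
      add_mulVec, smul_mulVec, ← mulVec_mulVec, one_mulVec, neg_mulVec, mulVec_sub,
      Pi.smul_apply, Pi.sub_apply, Pi.add_apply, Pi.neg_apply, smul_eq_mul, WithLp.toLp_smul,
      WithLp.toLp_sub, add_zero, PiLp.add_apply, PiLp.smul_apply, PiLp.sub_apply]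
    ring
  have hcross : HasGradientAt
      (fun b : EuclideanSpace ℝ (Fin r) => ∑ i, ((Xq *ᵥ βq) i - (M *ᵥ (Xa *ᵥ b)) i) ^ 2)
      (WithLp.toLp 2 ((2 : ℝ) • ((M * Xa)ᵀ *ᵥ ((M * Xa) *ᵥ βa - Xq *ᵥ βq)))) βa := by
    convert hasGradientAt_sum_sq_mulVec_sub (M * Xa) (Xq *ᵥ βq) βa using 2 with b
    simp only [mulVec_mulVec, sub_sq_comm]
  have ha : HasGradientAt (fun b => L βq b)
      (WithLp.toLp 2 ((2 : ℝ) • ((B *ᵥ Sum.elim βq βa) ∘ Sum.inr - Xaᵀ *ᵥ ya))) βa := by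
    convert (((hasGradientAt_const βa _).add (hasGradientAt_sum_sq_mulVec_sub Xa ya βa)).add
      (hcross.const_mul η)).add
      (((hasGradientAt_const βa _).add (EuclideanSpace.hasGradientAt_sum_sq βa)).const_mul lam)
      using 1
    ext i
    simp only [B, neg_smul, fromBlocks_mulVec, Sum.elim_comp_inl, Sum.elim_comp_inr,
      add_mulVec, smul_mulVec, ← mulVec_mulVec, one_mulVec, neg_mulVec, mulVec_sub, transpose_mul,
      Pi.smul_apply, Pi.sub_apply, Pi.add_apply, Pi.neg_apply, smul_eq_mul, WithLp.toLp_smul,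
      WithLp.toLp_sub, zero_add, PiLp.add_apply, PiLp.smul_apply, PiLp.sub_apply]
    ring
  rw [hq.hasGradientAt_zero_iff, ha.hasGradientAt_zero_iff,
    ← Sum.elim_comp_inl_inr (B *ᵥ Sum.elim βq βa), Sum.elim_eq_iff]
  simp [sub_eq_zero]

/-- A pair `(βq, βa)` is a critical point of the joint square-loss objective `L`
(both partial gradients vanish) if and only if `B ⬝ (βq; βa) = (Xqᵀ yq; Xaᵀ ya)`,
where `B` is the block matrix with blocks `B₁₁ = (η+1)XqᵀXq + λI`,
`B₁₂ = -η Xqᵀ M̃ Xa`, `B₂₁ = -η Xaᵀ M̃ᵀ Xq`, `B₂₂ = XaᵀXa + η Xaᵀ M̃ᵀ M̃ Xa + λI`. -/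
theorem cops_critical_point_iff_linear_system (nq na p r : ℕ)
    (Xq : Matrix (Fin nq) (Fin p) ℝ) (Xa : Matrix (Fin na) (Fin r) ℝ)
    (M : Matrix (Fin nq) (Fin na) ℝ) (yq : Fin nq → ℝ) (ya : Fin na → ℝ)
    (η lam : ℝ) (hη : 0 ≤ η) (hlam : 0 < lam) :
    let L : EuclideanSpace ℝ (Fin p) → EuclideanSpace ℝ (Fin r) → ℝ := fun βq βa =>
      ∑ i, (Xq.mulVec βq i - yq i) ^ 2 + ∑ j, (Xa.mulVec βa j - ya j) ^ 2 +
        η * ∑ i, (Xq.mulVec βq i - M.mulVec (Xa.mulVec βa) i) ^ 2 +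
        lam * (∑ i, (βq i) ^ 2 + ∑ j, (βa j) ^ 2)
    let B : Matrix (Fin p ⊕ Fin r) (Fin p ⊕ Fin r) ℝ := Matrix.fromBlocks
      ((η + 1) • (Xqᵀ * Xq) + lam • (1 : Matrix (Fin p) (Fin p) ℝ))
      ((-η) • (Xqᵀ * M * Xa))
      ((-η) • (Xaᵀ * Mᵀ * Xq))
      (Xaᵀ * Xa + η • (Xaᵀ * Mᵀ * M * Xa) + lam • (1 : Matrix (Fin r) (Fin r) ℝ))
    ∀ (βq : EuclideanSpace ℝ (Fin p)) (βa : EuclideanSpace ℝ (Fin r)),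
      (HasGradientAt (fun b => L b βa) (0 : EuclideanSpace ℝ (Fin p)) βq ∧
        HasGradientAt (fun b => L βq b) (0 : EuclideanSpace ℝ (Fin r)) βa) ↔
      B.mulVec (Sum.elim βq βa) = Sum.elim (Xqᵀ.mulVec yq) (Xaᵀ.mulVec ya) :=
  cops_critical_point_iff_linear_system_general nq na p r Xq Xa M yq ya η lam
end

section
/- Let X_q, X_a, M̃, y_q, y_a, η ≥ 0, λ > 0 be as above, let L be the joint square-loss objective, and let B be the block matrix with blocks B₁₁ = (η+1)X_qᵀX_q + λI, B₁₂ = −η X_qᵀ M̃ X_a, B₂₁ = −η X_aᵀ M̃ᵀ X_q, B₂₂ = X_aᵀX_a + η X_aᵀ M̃ᵀ M̃ X_a + λI. Then the stacked vector (β_q*; β_a*) = B⁻¹ (X_qᵀ y_q; X_aᵀ y_a) is the unique global minimizer of L over ℝᵖ × ℝʳ. -/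
/-!
Writing `β = (βq; βa)` and `c = (Xqᵀ yq; Xaᵀ ya)`, the loss is the quadratic
`L β = βᵀ B β - 2 cᵀ β + ‖yq‖² + ‖ya‖²`, and `βᵀ B β` is the loss with zero targets, hence at
least `λ ‖β‖²`; so `B` is positive definite. Completing the square at `β* = B⁻¹ c` gives
`L β = L β* + (β - β*)ᵀ B (β - β*)`, whence minimality and uniqueness.
-/

open Matrix

section CompletingTheSquare

variable {n R : Type*} [Fintype n]

def quadraticObjective [CommRing R] (B : Matrix n n R) (c v : n → R) : R :=
  v ⬝ᵥ B *ᵥ v - 2 * (c ⬝ᵥ v)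

theorem Matrix.IsSymm.quadraticObjective_eq_add [CommRing R] {B : Matrix n n R} (hB : B.IsSymm)
    {c x : n → R} (hx : B *ᵥ x = c) (v : n → R) :
    quadraticObjective B c v = quadraticObjective B c x + (v - x) ⬝ᵥ B *ᵥ (v - x) := by
  have hxv : x ⬝ᵥ B *ᵥ v = c ⬝ᵥ v := by
    rw [dotProduct_mulVec, ← hB.eq, vecMul_transpose, hx]
  simp only [quadraticObjective, mulVec_sub, dotProduct_sub, sub_dotProduct, hx, hxv,
    dotProduct_comm v c, dotProduct_comm x c]
  ring

variable [DecidableEq n] {B : Matrix n n ℝ}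

theorem Matrix.PosDef.quadraticObjective_eq_add (hB : B.PosDef) (c v : n → ℝ) :
    quadraticObjective B c v = quadraticObjective B c (B⁻¹ *ᵥ c) +
      (v - B⁻¹ *ᵥ c) ⬝ᵥ B *ᵥ (v - B⁻¹ *ᵥ c) := by
  refine IsSymm.quadraticObjective_eq_add ?_ ?_ v
  · exact isHermitian_iff_isSymm.1 hB.isHermitian
  · rw [mulVec_mulVec, mul_nonsing_inv _ ((isUnit_iff_isUnit_det B).1 hB.isUnit), one_mulVec]

theorem Matrix.PosDef.quadraticObjective_inv_mulVec_le (hB : B.PosDef) (c v : n → ℝ) :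
    quadraticObjective B c (B⁻¹ *ᵥ c) ≤ quadraticObjective B c v := by
  rw [hB.quadraticObjective_eq_add c v, le_add_iff_nonneg_right]
  simpa using hB.posSemidef.dotProduct_mulVec_nonneg (v - B⁻¹ *ᵥ c)

theorem Matrix.PosDef.eq_inv_mulVec_of_quadraticObjective_eq (hB : B.PosDef) {c v : n → ℝ}
    (h : quadraticObjective B c v = quadraticObjective B c (B⁻¹ *ᵥ c)) : v = B⁻¹ *ᵥ c := by
  rw [hB.quadraticObjective_eq_add c v, add_eq_left] at h
  by_contra hne
  simpa [h] using hB.dotProduct_mulVec_pos (sub_ne_zero.2 hne)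

end CompletingTheSquare

private theorem sum_sq_eq_dotProduct {n : Type*} [Fintype n] (v : n → ℝ) :
    ∑ i, v i ^ 2 = v ⬝ᵥ v := by
  simp [dotProduct, sq]

private theorem sum_sub_sq_eq_dotProduct {n : Type*} [Fintype n] (u v : n → ℝ) :
    ∑ i, (u i - v i) ^ 2 = (u - v) ⬝ᵥ (u - v) :=
  sum_sq_eq_dotProduct (u - v)

section JointLoss

variable {ιq ιa κq κa : Type*} [Fintype ιq] [Fintype ιa]
  (Xq : Matrix ιq κq ℝ) (Xa : Matrix ιa κa ℝ) (M : Matrix ιq ιa ℝ) (η lam : ℝ)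

def jointLoss [Fintype κq] [Fintype κa] (yq : ιq → ℝ) (ya : ιa → ℝ) (βq : κq → ℝ) (βa : κa → ℝ) :
    ℝ :=
  ∑ i, (Xq.mulVec βq i - yq i) ^ 2 + ∑ j, (Xa.mulVec βa j - ya j) ^ 2 +
    η * ∑ i, (Xq.mulVec βq i - M.mulVec (Xa.mulVec βa) i) ^ 2 +
    lam * (∑ i, (βq i) ^ 2 + ∑ j, (βa j) ^ 2)

variable [DecidableEq κq] [DecidableEq κa]

def jointGram : Matrix (κq ⊕ κa) (κq ⊕ κa) ℝ :=
  fromBlocks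
    ((η + 1) • (Xqᵀ * Xq) + lam • (1 : Matrix κq κq ℝ))
    ((-η) • (Xqᵀ * M * Xa))
    ((-η) • (Xaᵀ * Mᵀ * Xq))
    (Xaᵀ * Xa + η • (Xaᵀ * Mᵀ * M * Xa) + lam • (1 : Matrix κa κa ℝ))

theorem jointGram_isSymm : (jointGram Xq Xa M η lam).IsSymm := by
  simp [IsSymm, jointGram, fromBlocks_transpose, transpose_mul, Matrix.mul_assoc]

variable [Fintype κq] [Fintype κa]

theorem sumElim_dotProduct_jointGram_mulVec (vq : κq → ℝ) (va : κa → ℝ) :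
    (vq ⊕ᵥ va) ⬝ᵥ jointGram Xq Xa M η lam *ᵥ (vq ⊕ᵥ va) = jointLoss Xq Xa M η lam 0 0 vq va := by
  simp only [jointGram, jointLoss, fromBlocks_mulVec, sumElim_dotProduct_sumElim, Pi.zero_apply,
    sub_zero, sum_sub_sq_eq_dotProduct, sum_sq_eq_dotProduct, Sum.elim_comp_inl,
    Sum.elim_comp_inr, add_mulVec, smul_mulVec, one_mulVec, dotProduct_add, dotProduct_smul,
    ← mulVec_mulVec, smul_eq_mul, dotProduct_sub, sub_dotProduct, dotProduct_transpose_mulVec]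
  rw [dotProduct_comm (Mᵀ *ᵥ _), dotProduct_comm (Mᵀ *ᵥ _), dotProduct_transpose_mulVec,
    dotProduct_transpose_mulVec, dotProduct_comm (M *ᵥ _) (Xq *ᵥ vq)]
  ring

theorem jointLoss_eq_quadraticObjective (yq : ιq → ℝ) (ya : ιa → ℝ) (βq : κq → ℝ) (βa : κa → ℝ) :
    jointLoss Xq Xa M η lam yq ya βq βa =
      quadraticObjective (jointGram Xq Xa M η lam) (Xqᵀ *ᵥ yq ⊕ᵥ Xaᵀ *ᵥ ya) (βq ⊕ᵥ βa) +
        (yq ⬝ᵥ yq + ya ⬝ᵥ ya) := by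
  rw [quadraticObjective, sumElim_dotProduct_jointGram_mulVec, sumElim_dotProduct_sumElim,
    dotProduct_comm _ βq, dotProduct_comm _ βa, dotProduct_transpose_mulVec,
    dotProduct_transpose_mulVec]
  simp only [jointLoss, sum_sub_sq_eq_dotProduct, sub_zero, dotProduct_sub, sub_dotProduct,
    dotProduct_comm yq, dotProduct_comm ya]
  ring

theorem jointGram_posDef (hη : 0 ≤ η) (hlam : 0 < lam) : (jointGram Xq Xa M η lam).PosDef := by
  refine .of_dotProduct_mulVec_pos (isHermitian_iff_isSymm.2 (jointGram_isSymm ..)) fun v hv => ?_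
  have hv2 : 0 < ∑ i, (v ∘ Sum.inl) i ^ 2 + ∑ j, (v ∘ Sum.inr) j ^ 2 := by
    rw [sum_sq_eq_dotProduct, sum_sq_eq_dotProduct, ← sumElim_dotProduct_sumElim,
      Sum.elim_comp_inl_inr]
    simpa using dotProduct_self_star_pos_iff.2 hv
  rw [star_trivial, ← Sum.elim_comp_inl_inr v, sumElim_dotProduct_jointGram_mulVec]
  unfold jointLoss
  exact lt_add_of_nonneg_of_lt (by positivity) (mul_pos hlam hv2)

end JointLoss

/-- The stacked vector `(βq*; βa*) = B⁻¹ (Xqᵀ yq; Xaᵀ ya)` is the unique global minimizer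
of the joint square-loss objective `L` over `ℝᵖ × ℝʳ`, where `B` is the block matrix with
blocks `B₁₁ = (η+1)XqᵀXq + λI`, `B₁₂ = -η Xqᵀ M̃ Xa`, `B₂₁ = -η Xaᵀ M̃ᵀ Xq`,
`B₂₂ = XaᵀXa + η Xaᵀ M̃ᵀ M̃ Xa + λI`. -/
theorem cops_closed_form_unique_global_minimizer (nq na p r : ℕ)
    (Xq : Matrix (Fin nq) (Fin p) ℝ) (Xa : Matrix (Fin na) (Fin r) ℝ)
    (M : Matrix (Fin nq) (Fin na) ℝ) (yq : Fin nq → ℝ) (ya : Fin na → ℝ)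
    (η lam : ℝ) (hη : 0 ≤ η) (hlam : 0 < lam) :
    let L : (Fin p → ℝ) → (Fin r → ℝ) → ℝ := fun βq βa =>
      ∑ i, (Xq.mulVec βq i - yq i) ^ 2 + ∑ j, (Xa.mulVec βa j - ya j) ^ 2 +
        η * ∑ i, (Xq.mulVec βq i - M.mulVec (Xa.mulVec βa) i) ^ 2 +
        lam * (∑ i, (βq i) ^ 2 + ∑ j, (βa j) ^ 2)
    let B : Matrix (Fin p ⊕ Fin r) (Fin p ⊕ Fin r) ℝ := Matrix.fromBlocks
      ((η + 1) • (Xqᵀ * Xq) + lam • (1 : Matrix (Fin p) (Fin p) ℝ))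
      ((-η) • (Xqᵀ * M * Xa))
      ((-η) • (Xaᵀ * Mᵀ * Xq))
      (Xaᵀ * Xa + η • (Xaᵀ * Mᵀ * M * Xa) + lam • (1 : Matrix (Fin r) (Fin r) ℝ))
    let βstar : Fin p ⊕ Fin r → ℝ := B⁻¹.mulVec (Sum.elim (Xqᵀ.mulVec yq) (Xaᵀ.mulVec ya))
    ∀ (βq : Fin p → ℝ) (βa : Fin r → ℝ),
      L (βstar ∘ Sum.inl) (βstar ∘ Sum.inr) ≤ L βq βa ∧
        (L βq βa = L (βstar ∘ Sum.inl) (βstar ∘ Sum.inr) →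
          βq = βstar ∘ Sum.inl ∧ βa = βstar ∘ Sum.inr) := by
  intro L B βstar βq βa
  have hB : B.PosDef := jointGram_posDef Xq Xa M η lam hη hlam
  have hL (vq : Fin p → ℝ) (va : Fin r → ℝ) : L vq va =
      quadraticObjective B (Xqᵀ *ᵥ yq ⊕ᵥ Xaᵀ *ᵥ ya) (vq ⊕ᵥ va) + (yq ⬝ᵥ yq + ya ⬝ᵥ ya) :=
    jointLoss_eq_quadraticObjective Xq Xa M η lam yq ya vq va
  simp only [hL, Sum.elim_comp_inl_inr, add_le_add_iff_right, add_left_inj]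
  refine ⟨hB.quadraticObjective_inv_mulVec_le _ _, fun h => ?_⟩
  have hβ := hB.eq_inv_mulVec_of_quadraticObjective_eq h
  exact ⟨congrArg (· ∘ Sum.inl) hβ, congrArg (· ∘ Sum.inr) hβ⟩
end
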